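/- There is a constant C > 0 such that for all sufficiently large T, ∫_T^{2T} u_T(2t)^4 dt ≤ C · T (log T)^{4/3}, where u_T(t) = Σ_{n≤T} cos(t log n)/n. -/

import Mathlib

/-!
Write `u_T(t) = ∑_{n ≤ T} cos (t log n) / n` and cut it at `K = ⌊(log T)⁴⌋` into a short sum `v`
(`n ≤ K`) and a long sum `w`, so that `u⁴ ≤ 8 v⁴ + 8 w⁴`. Pointwise `|v| ≤ 1 + log K ≈ 4 log log T`,
which is eventually below `(log T)^{1/3}`, so `∫ v⁴ ≪ T (log T)^{4/3}`. For `w` we use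
`∫ w⁴ ≤ sup |w|² ∫ w² ≤ (1 + log T)² ∫ w²` together with the mean value bound
`∫_a^b w² ≤ (b - a) ∑_{n > K} n⁻² + O((log T)²)`: the off-diagonal terms are controlled by
`∫ cos (t log m) cos (t log n) = O(1 / (log n - log m))` and `log n - log m ≥ (n - m) / n`.
Since `∑_{n > K} n⁻² ≪ (log T)⁻⁴`, this gives `∫ w⁴ ≪ T`.
-/

open Real Filter Finset

lemma abs_integral_cos_mul_le {c : ℝ} (hc : c ≠ 0) (a b : ℝ) :
    |∫ t in a..b, cos (c * t)| ≤ 2 / |c| := by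
  rw [intervalIntegral.integral_comp_mul_left _ hc, integral_cos, smul_eq_mul, abs_mul, abs_inv,
    ← div_eq_inv_mul]
  gcongr
  calc |sin (c * b) - sin (c * a)| ≤ |sin (c * b)| + |sin (c * a)| := abs_sub _ _
    _ ≤ 2 := by linarith [abs_sin_le_one (c * b), abs_sin_le_one (c * a)]

lemma abs_integral_cos_mul_cos_le {p q : ℝ} (hp : 0 ≤ p) (hq : 0 ≤ q) (hpq : p ≠ q) (a b : ℝ) :
    |∫ t in a..b, cos (t * p) * cos (t * q)| ≤ 2 / |p - q| := by
  have hsub : p - q ≠ 0 := sub_ne_zero.mpr hpq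
  have hadd : p + q ≠ 0 := fun h => hpq (by linarith)
  have hprod : ∀ t, cos (t * p) * cos (t * q) = (cos ((p - q) * t) + cos ((p + q) * t)) / 2 := by
    intro t
    rw [show (p - q) * t = t * p - t * q by ring, show (p + q) * t = t * p + t * q by ring,
      cos_sub, cos_add]
    ring
  have hint : ∀ c : ℝ, IntervalIntegrable (fun t => cos (c * t)) MeasureTheory.volume a b :=
    fun c => (by fun_prop : Continuous fun t => cos (c * t)).intervalIntegrable a b
  have hle : |p - q| ≤ |p + q| := by
    rw [abs_of_nonneg (by linarith : 0 ≤ p + q)]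
    exact abs_sub_le_iff.mpr ⟨by linarith, by linarith⟩
  simp_rw [hprod]
  rw [intervalIntegral.integral_div, intervalIntegral.integral_add (hint _) (hint _), abs_div,
    abs_two]
  calc |(∫ t in a..b, cos ((p - q) * t)) + ∫ t in a..b, cos ((p + q) * t)| / 2
      ≤ (2 / |p - q| + 2 / |p + q|) / 2 := by
        gcongr
        exact (abs_add_le _ _).trans
          (add_le_add (abs_integral_cos_mul_le hsub a b) (abs_integral_cos_mul_le hadd a b))
    _ ≤ (2 / |p - q| + 2 / |p - q|) / 2 := by gcongr
    _ = 2 / |p - q| := by ring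

lemma sub_div_le_log_sub_log {x y : ℝ} (hx : 0 < x) (hxy : x ≤ y) :
    (y - x) / y ≤ log y - log x := by
  have hy : 0 < y := hx.trans_le hxy
  have := one_sub_inv_le_log_of_pos (div_pos hy hx)
  rw [log_div hy.ne' hx.ne', inv_div] at this
  calc (y - x) / y = 1 - x / y := by field_simp
    _ ≤ _ := this

/-- `cosSum (Icc 1 ⌊T⌋₊)` is `u_T`. -/
noncomputable def cosSum (s : Finset ℕ) (t : ℝ) : ℝ := ∑ n ∈ s, cos (t * log n) / n

@[fun_prop]
lemma continuous_cosSum (s : Finset ℕ) : Continuous (cosSum s) := by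
  unfold cosSum; fun_prop

lemma integral_cos_log_mul_cos_log_le {m n : ℕ} (hm : 1 ≤ m) (hmn : m < n) (a b : ℝ) :
    ∫ t in a..b, cos (t * log m) / m * (cos (t * log n) / n) ≤ 2 / (m * (n - m)) := by
  have hm0 : (0 : ℝ) < m := by exact_mod_cast hm
  have hmn' : (m : ℝ) < n := by exact_mod_cast hmn
  have hn0 : (0 : ℝ) < n := hm0.trans hmn'
  have hgap : ((n : ℝ) - m) / n ≤ log n - log m := sub_div_le_log_sub_log hm0 hmn'.le
  have hgap0 : 0 < ((n : ℝ) - m) / n := div_pos (by linarith) hn0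
  have hlog := log_lt_log hm0 hmn'
  have hpq := abs_integral_cos_mul_cos_le (log_nonneg (by exact_mod_cast hm))
    (log_nonneg (by exact_mod_cast hm.trans hmn.le)) hlog.ne a b
  rw [abs_sub_comm, abs_of_pos (sub_pos.mpr hlog)] at hpq
  simp_rw [div_mul_div_comm]
  rw [intervalIntegral.integral_div]
  calc (∫ t in a..b, cos (t * log m) * cos (t * log n)) / (m * n)
      ≤ 2 / (log n - log m) / (m * n) := by gcongr; exact (le_abs_self _).trans hpq
    _ ≤ 2 / ((n - m) / n) / (m * n) := by gcongr
    _ = 2 / (m * (n - m)) := by field_simp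

lemma integral_cos_log_mul_self_le (n : ℕ) {a b : ℝ} (hab : a ≤ b) :
    ∫ t in a..b, cos (t * log n) / n * (cos (t * log n) / n) ≤ (b - a) / n ^ 2 := by
  have h := intervalIntegral.norm_integral_le_of_norm_le_const (a := a) (b := b)
    (f := fun t => cos (t * log n) / n * (cos (t * log n) / n)) (C := 1 / n ^ 2) fun t _ => by
      rw [← sq, Real.norm_eq_abs, abs_of_nonneg (sq_nonneg _), div_pow]
      gcongr
      exact cos_sq_le_one _
  rw [abs_of_nonneg (by linarith), Real.norm_eq_abs] at h
  calc _ ≤ _ := le_abs_self _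
    _ ≤ _ := h
    _ = (b - a) / n ^ 2 := by ring

lemma sum_inv_le_one_add_log {s : Finset ℕ} {N : ℕ} (hs : s ⊆ Icc 1 N) :
    ∑ n ∈ s, 1 / (n : ℝ) ≤ 1 + log N :=
  calc ∑ n ∈ s, 1 / (n : ℝ) ≤ ∑ n ∈ Icc 1 N, 1 / (n : ℝ) :=
        sum_le_sum_of_subset_of_nonneg hs fun _ _ _ => by positivity
    _ ≤ 1 + log N := by simpa [harmonic_eq_sum_Icc] using harmonic_le_one_add_log N

lemma sum_inv_sub_le_one_add_log (m N : ℕ) :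
    ∑ n ∈ Icc 1 N with m < n, 1 / ((n : ℝ) - m) ≤ 1 + log N := by
  set S := {n ∈ Icc 1 N | m < n}
  have hcast : ∀ n ∈ S, 1 / ((n : ℝ) - m) = 1 / ((n - m : ℕ) : ℝ) := by
    intro n hn
    rw [Nat.cast_sub (mem_filter.mp hn).2.le]
  have hinj : Set.InjOn (· - m) (S : Set ℕ) := by
    intro x hx y hy h
    simp only [S, mem_coe, mem_filter] at hx hy h
    omega
  have hsub : S.image (· - m) ⊆ Icc 1 N := by
    intro k hk
    simp only [S, mem_image, mem_filter, mem_Icc] at hk ⊢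
    omega
  rw [sum_congr rfl hcast, ← sum_image (f := fun k : ℕ => 1 / (k : ℝ)) hinj]
  exact sum_inv_le_one_add_log hsub

lemma sum_sum_ite_lt_inv_mul_sub_le {s : Finset ℕ} {N : ℕ} (hs : s ⊆ Icc 1 N) :
    ∑ m ∈ s, ∑ n ∈ s, (if m < n then 1 / ((m : ℝ) * (n - m)) else 0) ≤ (1 + log N) ^ 2 := by
  have hnn : ∀ m n : ℕ, 0 ≤ (if m < n then 1 / ((m : ℝ) * (n - m)) else 0) := by
    intro m n
    split_ifs with h
    · have : (m : ℝ) < n := by exact_mod_cast h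
      exact div_nonneg zero_le_one (mul_nonneg (Nat.cast_nonneg m) (by linarith))
    · exact le_rfl
  have hinner : ∀ m ∈ s, ∑ n ∈ s, (if m < n then 1 / ((m : ℝ) * (n - m)) else 0)
      ≤ 1 / (m : ℝ) * (1 + log N) := fun m _ =>
    calc ∑ n ∈ s, (if m < n then 1 / ((m : ℝ) * (n - m)) else 0)
        ≤ ∑ n ∈ Icc 1 N, (if m < n then 1 / ((m : ℝ) * (n - m)) else 0) :=
          sum_le_sum_of_subset_of_nonneg hs fun n _ _ => hnn m n
      _ = 1 / (m : ℝ) * ∑ n ∈ Icc 1 N with m < n, 1 / ((n : ℝ) - m) := by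
          rw [← sum_filter, mul_sum]
          exact sum_congr rfl fun n _ => by rw [one_div_mul_one_div]
      _ ≤ 1 / (m : ℝ) * (1 + log N) := by gcongr; exact sum_inv_sub_le_one_add_log m N
  calc _ ≤ ∑ m ∈ s, 1 / (m : ℝ) * (1 + log N) := sum_le_sum hinner
    _ = (∑ m ∈ s, 1 / (m : ℝ)) * (1 + log N) := by rw [sum_mul]
    _ ≤ (1 + log N) * (1 + log N) := by
        have := sum_inv_le_one_add_log hs
        gcongr
    _ = (1 + log N) ^ 2 := (sq _).symm

lemma integral_cosSum_sq_le {s : Finset ℕ} {N : ℕ} (hs : s ⊆ Icc 1 N) {a b : ℝ} (hab : a ≤ b) :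
    ∫ t in a..b, cosSum s t ^ 2 ≤ (b - a) * ∑ n ∈ s, 1 / (n : ℝ) ^ 2 + 4 * (1 + log N) ^ 2 := by
  set f : ℕ → ℝ → ℝ := fun n t => cos (t * log n) / n
  set G : ℕ → ℕ → ℝ := fun m n => if m < n then 1 / ((m : ℝ) * (n - m)) else 0
  have hf : ∀ m n, IntervalIntegrable (fun t => f m t * f n t) MeasureTheory.volume a b :=
    fun m n => (by fun_prop : Continuous fun t => f m t * f n t).intervalIntegrable a b
  have hexpand : ∫ t in a..b, cosSum s t ^ 2 = ∑ m ∈ s, ∑ n ∈ s, ∫ t in a..b, f m t * f n t := by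
    simp_rw [cosSum, sq, sum_mul_sum]
    rw [intervalIntegral.integral_finsetSum fun m _ =>
      (by fun_prop : Continuous fun t => ∑ n ∈ s, f m t * f n t).intervalIntegrable a b]
    exact sum_congr rfl fun m _ => intervalIntegral.integral_finsetSum fun n _ => hf m n
  have hpair : ∀ m ∈ s, ∀ n ∈ s, ∫ t in a..b, f m t * f n t
      ≤ (if m = n then (b - a) / (n : ℝ) ^ 2 else 0) + 2 * (G m n + G n m) := by
    intro m hm n hn
    have h1 : ∀ k ∈ s, 1 ≤ k := fun k hk => (mem_Icc.mp (hs hk)).1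
    rcases lt_trichotomy m n with h | rfl | h
    · have := integral_cos_log_mul_cos_log_le (h1 m hm) h a b
      simp only [f, G, if_pos h, if_neg h.ne, if_neg h.not_gt, zero_add, add_zero, mul_one_div]
      linarith
    · have := integral_cos_log_mul_self_le m hab
      simp only [f, G, lt_irrefl, ↓reduceIte]
      linarith
    · have := integral_cos_log_mul_cos_log_le (h1 n hn) h a b
      simp_rw [mul_comm (f m _)]
      simp only [f, G, if_pos h, if_neg h.ne', if_neg h.not_gt, zero_add, mul_one_div]
      linarith
  have hdiag : ∑ m ∈ s, ∑ n ∈ s, (if m = n then (b - a) / (n : ℝ) ^ 2 else 0)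
      = (b - a) * ∑ n ∈ s, 1 / (n : ℝ) ^ 2 := by
    rw [mul_sum]
    exact sum_congr rfl fun m hm => by rw [sum_ite_eq s m, if_pos hm, mul_one_div]
  have hoff : ∑ m ∈ s, ∑ n ∈ s, 2 * (G m n + G n m) ≤ 4 * (1 + log N) ^ 2 := by
    simp_rw [← mul_sum, sum_add_distrib]
    rw [sum_comm (f := fun m n => G n m)]
    linarith [sum_sum_ite_lt_inv_mul_sub_le hs]
  calc ∫ t in a..b, cosSum s t ^ 2
      ≤ ∑ m ∈ s, ∑ n ∈ s,
          ((if m = n then (b - a) / (n : ℝ) ^ 2 else 0) + 2 * (G m n + G n m)) := by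
        rw [hexpand]
        exact sum_le_sum fun m hm => sum_le_sum fun n hn => hpair m hm n hn
    _ ≤ (b - a) * ∑ n ∈ s, 1 / (n : ℝ) ^ 2 + 4 * (1 + log N) ^ 2 := by
        simp_rw [sum_add_distrib]
        linarith

lemma abs_cosSum_le {s : Finset ℕ} {N : ℕ} (hs : s ⊆ Icc 1 N) (t : ℝ) :
    |cosSum s t| ≤ 1 + log N :=
  calc |cosSum s t| ≤ ∑ n ∈ s, |cos (t * log n) / n| := abs_sum_le_sum_abs _ _
    _ ≤ ∑ n ∈ s, 1 / (n : ℝ) := sum_le_sum fun n _ => by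
        rw [abs_div, Nat.abs_cast]
        gcongr
        exact abs_cos_le_one _
    _ ≤ 1 + log N := sum_inv_le_one_add_log hs

lemma add_pow_four_le (x y : ℝ) : (x + y) ^ 4 ≤ 8 * x ^ 4 + 8 * y ^ 4 := by
  nlinarith [sq_nonneg (x - y), sq_nonneg (x + y), sq_nonneg (x ^ 2 - y ^ 2), sq_nonneg (x * y)]

lemma integral_add_pow_four_le {f g : ℝ → ℝ} (hf : Continuous f) (hg : Continuous g) {a b : ℝ}
    (hab : a ≤ b) :
    ∫ t in a..b, (f t + g t) ^ 4 ≤ 8 * (∫ t in a..b, f t ^ 4) + 8 * ∫ t in a..b, g t ^ 4 := by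
  rw [← intervalIntegral.integral_const_mul, ← intervalIntegral.integral_const_mul,
    ← intervalIntegral.integral_add (Continuous.intervalIntegrable (by fun_prop) a b)
      (Continuous.intervalIntegrable (by fun_prop) a b)]
  exact intervalIntegral.integral_mono_on hab (Continuous.intervalIntegrable (by fun_prop) a b)
    (Continuous.intervalIntegrable (by fun_prop) a b)
    fun t _ => add_pow_four_le (f t) (g t)

lemma integral_pow_four_le_of_abs_le {f : ℝ → ℝ} {a b M : ℝ} (hab : a ≤ b)
    (hM : ∀ t, |f t| ≤ M) : ∫ t in a..b, f t ^ 4 ≤ (b - a) * M ^ 4 := by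
  have h := intervalIntegral.norm_integral_le_of_norm_le_const (a := a) (b := b)
    (f := fun t => f t ^ 4) (C := M ^ 4) fun t _ => by
      rw [Real.norm_eq_abs, abs_pow]
      exact pow_le_pow_left₀ (abs_nonneg _) (hM t) 4
  rw [Real.norm_eq_abs, abs_of_nonneg (sub_nonneg.mpr hab)] at h
  linarith [le_abs_self (∫ t in a..b, f t ^ 4)]

lemma integral_pow_four_le_mul_integral_sq {f : ℝ → ℝ} (hf : Continuous f) {a b M : ℝ}
    (hab : a ≤ b) (hM : ∀ t, |f t| ≤ M) :
    ∫ t in a..b, f t ^ 4 ≤ M ^ 2 * ∫ t in a..b, f t ^ 2 := by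
  rw [← intervalIntegral.integral_const_mul]
  refine intervalIntegral.integral_mono_on hab (Continuous.intervalIntegrable (by fun_prop) a b)
    (Continuous.intervalIntegrable (by fun_prop) a b) fun t _ => ?_
  have : f t ^ 2 ≤ M ^ 2 := sq_le_sq' (abs_le.mp (hM t)).1 (abs_le.mp (hM t)).2
  nlinarith [sq_nonneg (f t)]

lemma integral_cosSum_pow_four_le {a b : ℝ} (hab : a ≤ b) (K N : ℕ) :
    ∫ t in a..b, cosSum (Icc 1 N) t ^ 4
      ≤ 8 * ((b - a) * (1 + log K) ^ 4)
        + 8 * ((1 + log N) ^ 2 * ((b - a) * (2 / ((K : ℝ) + 1)) + 4 * (1 + log N) ^ 2)) := by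
  set small := {n ∈ Icc 1 N | n ≤ K}
  set large := {n ∈ Icc 1 N | ¬ n ≤ K}
  have hsplit : cosSum (Icc 1 N) = fun t => cosSum small t + cosSum large t :=
    funext fun t => (sum_filter_add_sum_filter_not _ _ _).symm
  have hsmall : small ⊆ Icc 1 K := fun n hn => by
    simp only [small, mem_filter, mem_Icc] at hn ⊢; omega
  have hlarge : large ⊆ Icc 1 N := filter_subset _ _
  have htail : ∑ n ∈ large, 1 / (n : ℝ) ^ 2 ≤ 2 / ((K : ℝ) + 1) := by
    have hsub : large ⊆ Ioo K (N + 1) := fun n hn => by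
      simp only [large, mem_filter, mem_Icc, mem_Ioo] at hn ⊢; omega
    simp_rw [one_div]
    exact (sum_le_sum_of_subset_of_nonneg hsub fun _ _ _ => by positivity).trans
      (sum_Ioo_inv_sq_le K (N + 1))
  rw [hsplit]
  refine (integral_add_pow_four_le (continuous_cosSum _) (continuous_cosSum _) hab).trans ?_
  gcongr
  · exact integral_pow_four_le_of_abs_le hab (abs_cosSum_le hsmall)
  · refine (integral_pow_four_le_mul_integral_sq (continuous_cosSum _) hab
      (abs_cosSum_le hlarge)).trans ?_
    gcongr
    exact (integral_cosSum_sq_le hlarge hab).trans (by gcongr)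

lemma integral_cosSum_pow_four_le_of_log {T : ℝ} (hy : 1 ≤ log T)
    (hloglog : 1 + 4 * log (log T) ≤ log T ^ (1 / 3 : ℝ)) (hT : log T ^ 4 ≤ T) :
    ∫ t in 2 * T..4 * T, cosSum (Icc 1 ⌊T⌋₊) t ^ 4 ≤ 656 * T * log T ^ (4 / 3 : ℝ) := by
  set y := log T
  set K := ⌊y ^ 4⌋₊
  set N := ⌊T⌋₊
  have hy4 : 1 ≤ y ^ 4 := one_le_pow₀ hy
  have hT0 : 0 < T := by linarith
  have hK : 1 ≤ K := Nat.one_le_floor_iff _ |>.mpr hy4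
  have hK0 : (0 : ℝ) < K := by exact_mod_cast hK
  have hlogK : (1 + log K) ^ 4 ≤ y ^ (4 / 3 : ℝ) := by
    have : log K ≤ 4 * log y :=
      calc log K ≤ log (y ^ 4) := log_le_log hK0 (Nat.floor_le (by positivity))
        _ = 4 * log y := by rw [log_pow]; norm_num
    calc (1 + log K) ^ 4 ≤ (y ^ (1 / 3 : ℝ)) ^ 4 :=
          pow_le_pow_left₀ (add_nonneg zero_le_one (log_natCast_nonneg K)) (by linarith) 4
      _ = y ^ (4 / 3 : ℝ) := by rw [← rpow_natCast, ← rpow_mul (by linarith)]; norm_num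
  have hKinv : 2 / ((K : ℝ) + 1) ≤ 2 / y ^ 4 := by
    gcongr; exact (Nat.lt_floor_add_one _).le
  have hlogN : 1 + log N ≤ 2 * y := by
    have : log N ≤ y := by
      rcases Nat.eq_zero_or_pos N with h | h
      · rw [h, Nat.cast_zero, log_zero]; linarith
      · exact log_le_log (by exact_mod_cast h) (Nat.floor_le hT0.le)
    linarith
  have hlogN0 : 0 ≤ 1 + log N := add_nonneg zero_le_one (log_natCast_nonneg N)
  have hrpow : 1 ≤ y ^ (4 / 3 : ℝ) := one_le_rpow hy (by norm_num)
  have hy2 : 1 ≤ y ^ 2 := one_le_pow₀ hy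
  have hsplit := integral_cosSum_pow_four_le (a := 2 * T) (b := 4 * T) (by linarith) K N
  rw [show 4 * T - 2 * T = 2 * T by ring] at hsplit
  calc ∫ t in 2 * T..4 * T, cosSum (Icc 1 N) t ^ 4
      ≤ 8 * (2 * T * (1 + log K) ^ 4)
        + 8 * ((1 + log N) ^ 2 * (2 * T * (2 / ((K : ℝ) + 1)) + 4 * (1 + log N) ^ 2)) := hsplit
    _ ≤ 8 * (2 * T * y ^ (4 / 3 : ℝ))
          + 8 * ((2 * y) ^ 2 * (2 * T * (2 / y ^ 4) + 4 * (2 * y) ^ 2)) := by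
        gcongr
    _ = 16 * T * y ^ (4 / 3 : ℝ) + 128 * (T / y ^ 2) + 512 * y ^ 4 := by
        field_simp
        ring
    _ ≤ 16 * T * y ^ (4 / 3 : ℝ) + 128 * T + 512 * T := by
        gcongr
        exact div_le_self hT0.le hy2
    _ ≤ 656 * T * y ^ (4 / 3 : ℝ) := by nlinarith

lemma eventually_log_bounds : ∀ᶠ T : ℝ in atTop,
    1 ≤ log T ∧ 1 + 4 * log (log T) ≤ log T ^ (1 / 3 : ℝ) ∧ log T ^ 4 ≤ T := by
  have hloglog : ∀ᶠ y : ℝ in atTop, 1 + 4 * log y ≤ y ^ (1 / 3 : ℝ) := by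
    filter_upwards [(isLittleO_log_rpow_atTop (by norm_num : (0 : ℝ) < 1 / 3)).bound
      (by norm_num : (0 : ℝ) < 1 / 5), tendsto_log_atTop.eventually_ge_atTop 1,
      eventually_ge_atTop 0] with y hy hlog hy0
    rw [norm_of_nonneg (by linarith), norm_of_nonneg (by positivity)] at hy
    linarith
  filter_upwards [tendsto_log_atTop.eventually_ge_atTop 1, tendsto_log_atTop.eventually hloglog,
    isLittleO_pow_log_id_atTop.bound one_pos, eventually_ge_atTop 0] with T hy hloglog hT hT0
  rw [norm_of_nonneg (by positivity), one_mul, id, norm_of_nonneg hT0] at hT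
  exact ⟨hy, hloglog, hT⟩

theorem fourth_moment_of_u_T :
    ∃ C > 0, ∀ᶠ T : ℝ in atTop,
      (∫ t in T..(2 * T),
          (∑ n ∈ Finset.Icc 1 ⌊T⌋₊, Real.cos ((2 * t) * Real.log n) / (n : ℝ)) ^ 4)
        ≤ C * T * (Real.log T) ^ ((4 : ℝ) / 3) := by
  refine ⟨328, by norm_num, ?_⟩
  filter_upwards [eventually_log_bounds] with T ⟨hy, hloglog, hT⟩
  have hrescale : ∫ t in T..2 * T, cosSum (Icc 1 ⌊T⌋₊) (2 * t) ^ 4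
      = 2⁻¹ * ∫ t in 2 * T..4 * T, cosSum (Icc 1 ⌊T⌋₊) t ^ 4 := by
    rw [intervalIntegral.integral_comp_mul_left (fun t => cosSum (Icc 1 ⌊T⌋₊) t ^ 4) two_ne_zero,
      smul_eq_mul]
    ring_nf
  change ∫ t in T..2 * T, cosSum (Icc 1 ⌊T⌋₊) (2 * t) ^ 4 ≤ _
  rw [hrescale]
  linarith [integral_cosSum_pow_four_le_of_log hy hloglog hT]
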